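/- arXiv:2001.06035 — 2 statements merged into one kernel-verified Lean document; each statement's English description precedes it below -/
import Mathlib

section
/- Fix integers k ≥ 1 and t with 1 ≤ t ≤ k, a real p ∈ [0,1] with q = 1 − p, and any received sequence y ∈ {0,1}^{t−1}. Let ρ(b) denote the posterior probability of message b ∈ {0,1}^k given y under a uniform prior, i.e., ρ(b) = ∏_{j=0}^{t−2} ℓ(b_j, y_j) / Σ_{b' ∈ {0,1}^k} ∏_{j=0}^{t−2} ℓ(b'_j, y_j). Let S_0 = {b : b_{t−1} = 0} and S_1 = {b : b_{t−1} = 1}. Then this partition satisfies the small-enough-difference (SED) criterion: 0 ≤ Σ_{b ∈ S_0} ρ(b) − Σ_{b ∈ S_1} ρ(b) ≤ min_{b ∈ S_0} ρ(b). Hence the first k transmissions can be sent systematically while maintaining the SED condition without any feedback. -/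
/-- For `1 ≤ t ≤ k`, `p ∈ [0,1]`, `q = 1 - p`, and any received sequence
`y ∈ {0,1}^{t-1}`, the posteriors `ρ(b) = ∏_{j<t-1} ℓ(b_j,y_j) / Σ_{b'} ∏_{j<t-1} ℓ(b'_j,y_j)`
under the uniform prior, with the systematic partition `S_0 = {b : b_{t-1} = 0}`,
`S_1 = {b : b_{t-1} = 1}`, satisfy the small-enough-difference (SED) criterion
`0 ≤ P(S_0) - P(S_1) ≤ min_{b ∈ S_0} ρ(b)`. -/
theorem systematic_partition_SED
    (k t : ℕ) (hk : 1 ≤ k) (ht1 : 1 ≤ t) (htk : t ≤ k)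
    (p : ℝ) (hp : p ∈ Set.Icc (0 : ℝ) 1) (q : ℝ) (hq : q = 1 - p)
    (y : Fin (t - 1) → Bool) :
    let L : (Fin k → Bool) → ℝ :=
      fun b => ∏ j : Fin (t - 1), (if b (Fin.castLE (by omega) j) = y j then q else p)
    let ρ : (Fin k → Bool) → ℝ := fun b => L b / ∑ b' : Fin k → Bool, L b'
    let S0 : Finset (Fin k → Bool) :=
      Finset.univ.filter (fun b => b ⟨t - 1, by omega⟩ = false)
    let S1 : Finset (Fin k → Bool) :=
      Finset.univ.filter (fun b => b ⟨t - 1, by omega⟩ = true)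
    0 ≤ (∑ b ∈ S0, ρ b) - (∑ b ∈ S1, ρ b) ∧
    (∑ b ∈ S0, ρ b) - (∑ b ∈ S1, ρ b) ≤
      S0.inf' ⟨fun _ => false, by simp [S0]⟩ ρ := by
  intro L ρ S0 S1
  have hq0 : 0 ≤ q := by rw [hq]; linarith [hp.2]
  have hL0 : ∀ b, 0 ≤ L b := fun b =>
    Finset.prod_nonneg (fun j _ => by split <;> [exact hq0; exact hp.1])
  have hρ0 : ∀ b, 0 ≤ ρ b := fun b =>
    div_nonneg (hL0 b) (Finset.sum_nonneg fun b' _ => hL0 b')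
  have hlt : t - 1 < k := by omega
  set i0 : Fin k := ⟨t - 1, hlt⟩ with hi0
  let flip : (Fin k → Bool) → (Fin k → Bool) := fun b i => if i = i0 then !b i else b i
  have hLflip : ∀ b, L (flip b) = L b := by
    intro b
    apply Finset.prod_congr rfl
    intro j _
    have hne : Fin.castLE (by omega) j ≠ i0 := by
      intro h
      have := congrArg Fin.val h
      simp [hi0] at this
      omega
    simp [flip, hne]
  have hflipmem : ∀ b v, b i0 = v → (flip b) i0 = !v := by
    intro b v h; simp [flip, h]
  have hflipflip : ∀ b, flip (flip b) = b := by
    intro b; funext i; by_cases h : i = i0 <;> simp [flip, h]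
  have hsum : (∑ b ∈ S0, ρ b) = ∑ b ∈ S1, ρ b := by
    refine Finset.sum_nbij' (i := flip) (j := flip) ?_ ?_ ?_ ?_ ?_
    · intro b hb
      simp only [S0, S1, Finset.mem_filter, Finset.mem_univ, true_and] at hb ⊢
      simpa using hflipmem b false hb
    · intro b hb
      simp only [S0, S1, Finset.mem_filter, Finset.mem_univ, true_and] at hb ⊢
      simpa using hflipmem b true hb
    · intro b _; exact hflipflip b
    · intro b _; exact hflipflip b
    · intro b _; simp only [ρ, hLflip]
  have hmin : 0 ≤ S0.inf' ⟨fun _ => false, by simp [S0]⟩ ρ :=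
    Finset.le_inf' _ _ fun b _ => hρ0 b
  constructor <;> rw [hsum] <;> simpa using hmin
end

section
/- Let M ≥ 1 and let ρ_1 ≥ ρ_2 ≥ ⋯ ≥ ρ_M > 0 be real numbers with Σ_{i=1}^{M} ρ_i = 1. Let m be the least index such that Σ_{i=1}^{m} ρ_i ≥ 1/2 (such m exists). Then the prefix partition S_0 = {1, …, m}, S_1 = {m+1, …, M} satisfies the relaxed SED criterion: 0 ≤ Σ_{i ∈ S_0} ρ_i − Σ_{i ∈ S_1} ρ_i ≤ 2 · ρ_m = 2 · min_{i ∈ S_0} ρ_i. -/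
/-- Let `ρ_0 ≥ ρ_1 ≥ ⋯ ≥ ρ_{M-1} > 0` (zero-indexed) sum to `1`. Then
there exists a least `m` (with `1 ≤ m ≤ M`) such that `Σ_{i<m} ρ_i ≥ 1/2`, and the prefix
partition `S_0 = {0,…,m-1}`, `S_1 = {m,…,M-1}` satisfies the relaxed SED criterion:
`0 ≤ P(S_0) − P(S_1) ≤ 2 ρ_{m-1} = 2 min_{i ∈ S_0} ρ_i` (indeed `ρ_{m-1}` is the minimum
of `ρ` over `S_0`). -/
theorem relaxed_SED_prefix_partition
    (M : ℕ) (hM : 1 ≤ M) (ρ : ℕ → ℝ)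
    (hdesc : ∀ i j : ℕ, i ≤ j → j < M → ρ j ≤ ρ i)
    (hpos : ∀ i : ℕ, i < M → 0 < ρ i)
    (hsum : ∑ i ∈ Finset.range M, ρ i = 1) :
    ∃ m : ℕ, 1 ≤ m ∧ m ≤ M ∧
      (1 / 2 ≤ ∑ i ∈ Finset.range m, ρ i) ∧
      (∀ m' : ℕ, m' < m → (∑ i ∈ Finset.range m', ρ i) < 1 / 2) ∧
      (∀ i : ℕ, i < m → ρ (m - 1) ≤ ρ i) ∧
      0 ≤ (∑ i ∈ Finset.range m, ρ i) - (∑ i ∈ Finset.Ico m M, ρ i) ∧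
      (∑ i ∈ Finset.range m, ρ i) - (∑ i ∈ Finset.Ico m M, ρ i) ≤ 2 * ρ (m - 1) := by
  classical
  have hex : ∃ m : ℕ, 1 / 2 ≤ ∑ i ∈ Finset.range m, ρ i := ⟨M, by rw [hsum]; norm_num⟩
  set m := Nat.find hex with hm
  have hge : 1 / 2 ≤ ∑ i ∈ Finset.range m, ρ i := Nat.find_spec hex
  have hlt : ∀ m' : ℕ, m' < m → (∑ i ∈ Finset.range m', ρ i) < 1 / 2 := by
    intro m' hm'
    have := Nat.find_min hex hm'
    linarith [not_le.mp this]
  have hm1 : 1 ≤ m := by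
    rcases Nat.eq_zero_or_pos m with h0 | h0
    · exfalso; rw [h0, Finset.sum_range_zero] at hge; linarith
    · exact h0
  have hmM : m ≤ M := Nat.find_min' hex (by rw [hsum]; norm_num)
  have hmin : ∀ i : ℕ, i < m → ρ (m - 1) ≤ ρ i := by
    intro i hi
    exact hdesc i (m - 1) (by omega) (by omega)
  have hsplit : (∑ i ∈ Finset.range m, ρ i) + (∑ i ∈ Finset.Ico m M, ρ i) = 1 := by
    rw [Finset.range_eq_Ico, Finset.sum_Ico_consecutive ρ (Nat.zero_le m) hmM,
      ← Finset.range_eq_Ico, hsum]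
  have hprev : (∑ i ∈ Finset.range (m - 1), ρ i) < 1 / 2 := hlt _ (by omega)
  have hstep : (∑ i ∈ Finset.range m, ρ i) = (∑ i ∈ Finset.range (m - 1), ρ i) + ρ (m - 1) := by
    conv_lhs => rw [show m = (m - 1) + 1 by omega, Finset.sum_range_succ]
  refine ⟨m, hm1, hmM, hge, hlt, hmin, by linarith, by linarith⟩
end
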